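/- A quantum channel E satisfies ε-quantum local differential privacy (i.e., tr(M E(ρ)) ≤ e^ε tr(M E(σ)) for all measurement operators 0 ⪯ M ⪯ I and all density matrices ρ, σ) if and only if for every pure state |ψ⟩, λ_max(E†(ψ)) ≤ e^ε λ_min(E†(ψ)), where ψ = |ψ⟩⟨ψ|. -/

import Mathlib

open Matrix Kronecker ComplexOrder

noncomputable def lamMax {n : Type*} [Fintype n] (A : Matrix n n ℂ) : ℝ :=
  ⨆ v : {v : n → ℂ // star v ⬝ᵥ v = 1}, (star v.1 ⬝ᵥ A.mulVec v.1).re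

noncomputable def lamMin {n : Type*} [Fintype n] (A : Matrix n n ℂ) : ℝ :=
  ⨅ v : {v : n → ℂ // star v ⬝ᵥ v = 1}, (star v.1 ⬝ᵥ A.mulVec v.1).re

noncomputable def pureState {n : Type*} (v : n → ℂ) : Matrix n n ℂ :=
  Matrix.vecMulVec v (star v)

noncomputable def chanApp {ι n : Type*} [Fintype ι] [Fintype n] (E : ι → Matrix n n ℂ)
    (ρ : Matrix n n ℂ) : Matrix n n ℂ := ∑ k, E k * ρ * (E k)ᴴ

noncomputable def adjApp {ι n : Type*} [Fintype ι] [Fintype n] (E : ι → Matrix n n ℂ)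
    (M : Matrix n n ℂ) : Matrix n n ℂ := ∑ k, (E k)ᴴ * M * E k

noncomputable def traceDist {n : Type*} [Fintype n] [DecidableEq n] (A B : Matrix n n ℂ) : ℝ :=
  (((Matrix.posSemidef_conjTranspose_mul_self (A - B)).1.eigenvectorUnitary.1 *
      diagonal (((↑) : ℝ → ℂ) ∘ Real.sqrt ∘ (Matrix.posSemidef_conjTranspose_mul_self (A - B)).1.eigenvalues) *
      (star (Matrix.posSemidef_conjTranspose_mul_self (A - B)).1.eigenvectorUnitary :
        Matrix n n ℂ)).trace).re / 2

noncomputable def depol {n : Type*} [Fintype n] [DecidableEq n] (D : ℕ) (p : ℝ)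
    (ρ : Matrix n n ℂ) : Matrix n n ℂ :=
  (p : ℂ) • ρ + (((1 - p) / D : ℝ) : ℂ) • 1

noncomputable def qldpOf {n : Type*} [Fintype n] (N : Matrix n n ℂ → Matrix n n ℂ) : ℝ :=
  ⨆ v : {v : n → ℂ // star v ⬝ᵥ v = 1},
    Real.log (lamMax (N (pureState v.1)) / lamMin (N (pureState v.1)))

/-! ### Auxiliary lemmas -/

lemma aux_trace_mul_pure {n : Type*} [Fintype n] (A : Matrix n n ℂ) (v : n → ℂ) :
    Matrix.trace (A * pureState v) = star v ⬝ᵥ A.mulVec v := by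
  simp only [Matrix.trace, Matrix.diag_apply, Matrix.mul_apply, pureState, vecMulVec_apply,
    dotProduct, mulVec, Pi.star_apply, Finset.mul_sum]
  congr 1; ext i; congr 1; ext j; ring

lemma aux_norm_form {n : Type*} [Fintype n] (v : n → ℂ) (hv : star v ⬝ᵥ v = 1) :
    ∑ i, Complex.normSq (v i) = 1 := by
  have := congrArg Complex.re hv
  simpa [dotProduct, Complex.mul_re, Complex.normSq] using this

lemma aux_qf_abs_le {n : Type*} [Fintype n] (A : Matrix n n ℂ) (v : n → ℂ)
    (hv : star v ⬝ᵥ v = 1) :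
    |(star v ⬝ᵥ A.mulVec v).re| ≤ ∑ i, ∑ j, ‖A i j‖ := by
  have h1 : ∀ i, ‖v i‖ ≤ 1 := by
    intro i
    have h2 := aux_norm_form v hv
    have h3 : Complex.normSq (v i) ≤ 1 := by
      rw [← h2]
      exact Finset.single_le_sum (f := fun i => Complex.normSq (v i))
        (fun _ _ => Complex.normSq_nonneg _) (Finset.mem_univ i)
    nlinarith [Complex.sq_norm (v i), norm_nonneg (v i)]
  calc |(star v ⬝ᵥ A.mulVec v).re| ≤ ‖star v ⬝ᵥ A.mulVec v‖ :=
        Complex.abs_re_le_norm _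
    _ ≤ ∑ i, ∑ j, ‖A i j‖ := by
        simp only [dotProduct, mulVec, Pi.star_apply]
        refine (norm_sum_le _ _).trans (Finset.sum_le_sum fun i _ => ?_)
        rw [Finset.mul_sum]
        refine (norm_sum_le _ _).trans (Finset.sum_le_sum fun j _ => ?_)
        rw [norm_mul, norm_mul]
        have hst : ‖star (v i)‖ = ‖v i‖ := Complex.norm_conj _
        rw [hst]
        have hvij : ‖v i‖ * ‖v j‖ ≤ 1 :=
          mul_le_one₀ (h1 i) (norm_nonneg _) (h1 j)
        calc ‖v i‖ * (‖A i j‖ * ‖v j‖)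
            = (‖v i‖ * ‖v j‖) * ‖A i j‖ := by ring
          _ ≤ 1 * ‖A i j‖ :=
              mul_le_mul_of_nonneg_right hvij (norm_nonneg _)
          _ = ‖A i j‖ := one_mul _

lemma aux_bddAbove {n : Type*} [Fintype n] (A : Matrix n n ℂ) :
    BddAbove (Set.range fun v : {v : n → ℂ // star v ⬝ᵥ v = 1} =>
      (star v.1 ⬝ᵥ A.mulVec v.1).re) := by
  refine ⟨∑ i, ∑ j, ‖A i j‖, ?_⟩
  rintro x ⟨v, rfl⟩
  exact (abs_le.mp (aux_qf_abs_le A v.1 v.2)).2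

lemma aux_bddBelow {n : Type*} [Fintype n] (A : Matrix n n ℂ) :
    BddBelow (Set.range fun v : {v : n → ℂ // star v ⬝ᵥ v = 1} =>
      (star v.1 ⬝ᵥ A.mulVec v.1).re) := by
  refine ⟨-∑ i, ∑ j, ‖A i j‖, ?_⟩
  rintro x ⟨v, rfl⟩
  exact neg_le_of_abs_le (aux_qf_abs_le A v.1 v.2)

lemma aux_le_lamMax {n : Type*} [Fintype n] (A : Matrix n n ℂ) (v : n → ℂ)
    (hv : star v ⬝ᵥ v = 1) : (star v ⬝ᵥ A.mulVec v).re ≤ lamMax A :=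
  le_ciSup (aux_bddAbove A) ⟨v, hv⟩

lemma aux_lamMin_le {n : Type*} [Fintype n] (A : Matrix n n ℂ) (v : n → ℂ)
    (hv : star v ⬝ᵥ v = 1) : lamMin A ≤ (star v ⬝ᵥ A.mulVec v).re :=
  ciInf_le (aux_bddBelow A) ⟨v, hv⟩

lemma aux_pureState_posSemidef {n : Type*} [Fintype n] (v : n → ℂ) :
    (pureState v).PosSemidef := by
  refine Matrix.PosSemidef.of_dotProduct_mulVec_nonneg ?_ ?_
  · ext i j
    simp [pureState, vecMulVec_apply, Matrix.conjTranspose_apply, mul_comm]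
  · intro x
    have : star x ⬝ᵥ (pureState v).mulVec x = star (star v ⬝ᵥ x) * (star v ⬝ᵥ x) := by
      simp only [pureState, dotProduct, mulVec, vecMulVec_apply, Pi.star_apply, Finset.mul_sum,
        Finset.sum_mul, star_sum, star_mul', star_star]
      rw [Finset.sum_comm]
      congr 1; ext i; congr 1; ext j; ring
    rw [this]
    exact star_mul_self_nonneg _

lemma aux_pureState_trace {n : Type*} [Fintype n] (v : n → ℂ) (hv : star v ⬝ᵥ v = 1) :
    (pureState v).trace = 1 := by
  simp only [Matrix.trace, Matrix.diag_apply, pureState, vecMulVec_apply, Pi.star_apply]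
  rw [← hv]; simp [dotProduct, mul_comm]

lemma aux_pureState_mul_self {n : Type*} [Fintype n] (v : n → ℂ) (hv : star v ⬝ᵥ v = 1) :
    pureState v * pureState v = pureState v := by
  ext i j
  simp only [pureState, Matrix.mul_apply, vecMulVec_apply, Pi.star_apply]
  have : ∑ k, v i * star (v k) * (v k * star (v j))
      = (v i * star (v j)) * ∑ k, star (v k) * v k := by
    rw [Finset.mul_sum]; congr 1; ext k; ring
  rw [this, show (∑ k, star (v k) * v k) = star v ⬝ᵥ v from rfl, hv, mul_one]

lemma aux_one_sub_pureState_posSemidef {n : Type*} [Fintype n] [DecidableEq n] (v : n → ℂ)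
    (hv : star v ⬝ᵥ v = 1) : (1 - pureState v).PosSemidef := by
  have h := Matrix.posSemidef_conjTranspose_mul_self (1 - pureState v)
  have hH : (pureState v)ᴴ = pureState v := (aux_pureState_posSemidef v).1
  have : (1 - pureState v)ᴴ * (1 - pureState v) = 1 - pureState v := by
    rw [conjTranspose_sub, conjTranspose_one, hH, sub_mul, mul_sub, mul_sub, mul_one, one_mul,
      aux_pureState_mul_self v hv, mul_one]
    abel
  rwa [this] at h

lemma aux_spectral_decomp {d : ℕ} {A : Matrix (Fin d) (Fin d) ℂ} (hA : A.PosSemidef) :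
    ∃ (m : Fin d → ℝ) (u : Fin d → Fin d → ℂ),
      (∀ i, 0 ≤ m i) ∧ (∀ i, star (u i) ⬝ᵥ u i = 1) ∧
      A = ∑ i, (m i : ℂ) • pureState (u i) ∧ (∑ i, m i : ℝ) = A.trace.re := by
  have hH := hA.1
  refine ⟨hH.eigenvalues, fun i j => (hH.eigenvectorUnitary : Matrix (Fin d) (Fin d) ℂ) j i,
    fun i => hA.eigenvalues_nonneg i, ?_, ?_, ?_⟩
  · intro i
    have h := congrFun (congrFun (Matrix.mem_unitaryGroup_iff'.mp hH.eigenvectorUnitary.2) i) i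
    simpa [Matrix.mul_apply, Matrix.one_apply, dotProduct, Matrix.star_apply,
      Matrix.conjTranspose_apply] using h
  · conv_lhs => rw [hH.spectral_theorem, Unitary.conjStarAlgAut_apply]
    ext j k
    rw [Matrix.mul_apply]
    simp only [Matrix.mul_diagonal, Matrix.sum_apply, Matrix.smul_apply, pureState,
      vecMulVec_apply, Matrix.star_apply, Pi.star_apply, Function.comp_apply, smul_eq_mul,
      Matrix.conjTranspose_apply, Complex.coe_algebraMap]
    congr 1; ext i; ring
  · have := congrArg Matrix.trace hH.spectral_theorem
    rw [Unitary.conjStarAlgAut_apply] at this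
    rw [Matrix.trace_mul_cycle] at this
    rw [Matrix.mem_unitaryGroup_iff'.mp hH.eigenvectorUnitary.2, one_mul,
      Matrix.trace_diagonal] at this
    rw [this]
    simp [Function.comp]

lemma aux_trace_chan_adj {d K : ℕ} (E : Fin K → Matrix (Fin d) (Fin d) ℂ)
    (M ρ : Matrix (Fin d) (Fin d) ℂ) :
    Matrix.trace (M * chanApp E ρ) = Matrix.trace (adjApp E M * ρ) := by
  unfold chanApp adjApp
  rw [Matrix.mul_sum, Matrix.sum_mul, Matrix.trace_sum, Matrix.trace_sum]
  congr 1; ext k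
  rw [show M * (E k * ρ * (E k)ᴴ) = M * E k * ρ * (E k)ᴴ by noncomm_ring,
    Matrix.trace_mul_comm,
    show (E k)ᴴ * (M * E k * ρ) = (E k)ᴴ * M * E k * ρ by noncomm_ring]

lemma aux_adjApp_posSemidef {d K : ℕ} (E : Fin K → Matrix (Fin d) (Fin d) ℂ)
    {M : Matrix (Fin d) (Fin d) ℂ} (hM : M.PosSemidef) : (adjApp E M).PosSemidef := by
  unfold adjApp
  refine Finset.sum_induction _ _ (fun a b ha hb => ha.add hb) Matrix.PosSemidef.zero
    fun k _ => hM.conjTranspose_mul_mul_same (E k)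

lemma aux_adjApp_sum {d K : ℕ} (E : Fin K → Matrix (Fin d) (Fin d) ℂ)
    (m : Fin d → ℝ) (B : Fin d → Matrix (Fin d) (Fin d) ℂ) :
    adjApp E (∑ i, (m i : ℂ) • B i) = ∑ i, (m i : ℂ) • adjApp E (B i) := by
  unfold adjApp
  simp only [Matrix.mul_sum, Matrix.sum_mul, Matrix.mul_smul, Matrix.smul_mul, Finset.smul_sum]
  exact Finset.sum_comm

lemma aux_trace_sum_smul {d : ℕ} (m : Fin d → ℝ) (B : Fin d → Matrix (Fin d) (Fin d) ℂ)
    (P : Matrix (Fin d) (Fin d) ℂ) :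
    (Matrix.trace ((∑ i, (m i : ℂ) • B i) * P)).re = ∑ i, m i * (Matrix.trace (B i * P)).re := by
  rw [Matrix.sum_mul, Matrix.trace_sum]
  rw [Complex.re_sum]
  congr 1; ext i
  rw [Matrix.smul_mul, Matrix.trace_smul, smul_eq_mul, Complex.re_ofReal_mul]

theorem stmt4 {d K : ℕ} (E : Fin K → Matrix (Fin d) (Fin d) ℂ)
    (hTP : ∑ k, (E k)ᴴ * E k = 1) (ε : ℝ) :
    (∀ M : Matrix (Fin d) (Fin d) ℂ, M.PosSemidef → (1 - M).PosSemidef →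
      ∀ ρ σ : Matrix (Fin d) (Fin d) ℂ,
        ρ.PosSemidef → ρ.trace = 1 → σ.PosSemidef → σ.trace = 1 →
        (Matrix.trace (M * chanApp E ρ)).re ≤
          Real.exp ε * (Matrix.trace (M * chanApp E σ)).re) ↔
    (∀ v : Fin d → ℂ, star v ⬝ᵥ v = 1 →
      lamMax (adjApp E (pureState v)) ≤ Real.exp ε * lamMin (adjApp E (pureState v))) := by
  have hexp : (0:ℝ) < Real.exp ε := Real.exp_pos ε
  constructor
  · intro H v hv
    have hne : Nonempty {v : Fin d → ℂ // star v ⬝ᵥ v = 1} := ⟨⟨v, hv⟩⟩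
    set A := adjApp E (pureState v) with hA
    have h2 : ∀ w : {v : Fin d → ℂ // star v ⬝ᵥ v = 1}, ∀ u : Fin d → ℂ, star u ⬝ᵥ u = 1 →
        (star u ⬝ᵥ A.mulVec u).re ≤ Real.exp ε * (star w.1 ⬝ᵥ A.mulVec w.1).re := by
      rintro ⟨w, hw⟩ u hu
      have h := H (pureState v) (aux_pureState_posSemidef v)
        (aux_one_sub_pureState_posSemidef v hv) (pureState u) (pureState w)
        (aux_pureState_posSemidef u) (aux_pureState_trace u hu)
        (aux_pureState_posSemidef w) (aux_pureState_trace w hw)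
      rwa [aux_trace_chan_adj, aux_trace_chan_adj, aux_trace_mul_pure, aux_trace_mul_pure] at h
    refine ciSup_le ?_
    rintro ⟨u, hu⟩
    have h3 : (star u ⬝ᵥ A.mulVec u).re / Real.exp ε ≤ lamMin A := by
      refine le_ciInf fun w => ?_
      rw [div_le_iff₀ hexp]
      have := h2 w u hu
      linarith
    have := (div_le_iff₀ hexp).mp h3
    linarith
  · intro H M hM _hM1 ρ σ hρ hρt hσ hσt
    obtain ⟨m, vv, hm0, hvu, hMeq, _⟩ := aux_spectral_decomp hM
    have key : ∀ u w : Fin d → ℂ, star u ⬝ᵥ u = 1 → star w ⬝ᵥ w = 1 →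
        (Matrix.trace (adjApp E M * pureState u)).re ≤
          Real.exp ε * (Matrix.trace (adjApp E M * pureState w)).re := by
      intro u w hu hw
      rw [hMeq, aux_adjApp_sum, aux_trace_sum_smul, aux_trace_sum_smul, Finset.mul_sum]
      refine Finset.sum_le_sum fun i _ => ?_
      set B := adjApp E (pureState (vv i)) with hB
      have ht : (Matrix.trace (B * pureState u)).re ≤
          Real.exp ε * (Matrix.trace (B * pureState w)).re := by
        rw [aux_trace_mul_pure, aux_trace_mul_pure]
        calc (star u ⬝ᵥ B.mulVec u).re ≤ lamMax B := aux_le_lamMax B u hu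
          _ ≤ Real.exp ε * lamMin B := H (vv i) (hvu i)
          _ ≤ Real.exp ε * (star w ⬝ᵥ B.mulVec w).re :=
              mul_le_mul_of_nonneg_left (aux_lamMin_le B w hw) hexp.le
      calc m i * (Matrix.trace (B * pureState u)).re
          ≤ m i * (Real.exp ε * (Matrix.trace (B * pureState w)).re) :=
            mul_le_mul_of_nonneg_left ht (hm0 i)
        _ = Real.exp ε * (m i * (Matrix.trace (B * pureState w)).re) := by ring
    obtain ⟨p, w, hp0, hwu, hρeq, hpsum⟩ := aux_spectral_decomp hρ
    obtain ⟨q, x, hq0, hxu, hσeq, hqsum⟩ := aux_spectral_decomp hσ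
    have hp1 : ∑ i, p i = 1 := by rw [hpsum, hρt]; simp
    have hq1 : ∑ i, q i = 1 := by rw [hqsum, hσt]; simp
    rw [aux_trace_chan_adj, aux_trace_chan_adj]
    have hρtr : (Matrix.trace (adjApp E M * ρ)).re
        = ∑ i, p i * (Matrix.trace (adjApp E M * pureState (w i))).re := by
      rw [Matrix.trace_mul_comm, hρeq, aux_trace_sum_smul]
      congr 1; ext i; rw [Matrix.trace_mul_comm]
    have hσtr : (Matrix.trace (adjApp E M * σ)).re
        = ∑ j, q j * (Matrix.trace (adjApp E M * pureState (x j))).re := by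
      rw [Matrix.trace_mul_comm, hσeq, aux_trace_sum_smul]
      congr 1; ext j; rw [Matrix.trace_mul_comm]
    rw [hρtr, hσtr]
    have step1 : ∀ j, ∑ i, p i * (Matrix.trace (adjApp E M * pureState (w i))).re ≤
        Real.exp ε * (Matrix.trace (adjApp E M * pureState (x j))).re := by
      intro j
      calc ∑ i, p i * (Matrix.trace (adjApp E M * pureState (w i))).re
          ≤ ∑ i, p i * (Real.exp ε * (Matrix.trace (adjApp E M * pureState (x j))).re) :=
            Finset.sum_le_sum fun i _ =>
              mul_le_mul_of_nonneg_left (key (w i) (x j) (hwu i) (hxu j)) (hp0 i)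
        _ = (∑ i, p i) * (Real.exp ε * (Matrix.trace (adjApp E M * pureState (x j))).re) := by
            rw [← Finset.sum_mul]
        _ = Real.exp ε * (Matrix.trace (adjApp E M * pureState (x j))).re := by
            rw [hp1, one_mul]
    calc ∑ i, p i * (Matrix.trace (adjApp E M * pureState (w i))).re
        = ∑ j, q j * (∑ i, p i * (Matrix.trace (adjApp E M * pureState (w i))).re) := by
          rw [← Finset.sum_mul, hq1, one_mul]
      _ ≤ ∑ j, q j * (Real.exp ε * (Matrix.trace (adjApp E M * pureState (x j))).re) :=
          Finset.sum_le_sum fun j _ => mul_le_mul_of_nonneg_left (step1 j) (hq0 j)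
      _ = Real.exp ε * ∑ j, q j * (Matrix.trace (adjApp E M * pureState (x j))).re := by
          rw [Finset.mul_sum]; congr 1; ext j; ring
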